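/- The regular open algebra B(M₃) of the poset X_{M₃} is the 64-element Boolean algebra: its atoms are exactly the six singletons {(a,b)}, {(a,c)}, {(b,a)}, {(b,c)}, {(c,a)}, {(c,b)}. -/

import Mathlib

/-
Every point of `X_{M₃}` lies above a minimal point, so a regular open set `U = □◇U`, being a
downset, is determined by the minimal points it contains: `U = □◇(U ∩ Min)`, and conversely
`□◇W ∩ Min = W` for every set `W` of minimal points. Hence `B(M₃)` is the powerset of the six
minimal points `(x, y)` with `x ≠ y` among `a, b, c`. Its atoms are the sets `□◇{m}`, and in
`X_{M₃}` each non-minimal point lies above two distinct minimal points, so `□◇{m} = {m}`.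
-/

/-- The diamond lattice `M₃ = {0, a, b, c, 1}` with three pairwise
incomparable middle elements `a`, `b`, `c`. -/
inductive M3 : Type
  | z | a | b | c | o
deriving DecidableEq

instance : Fintype M3 where
  elems := {M3.z, M3.a, M3.b, M3.c, M3.o}
  complete := fun x => by cases x <;> first | decide | simp

/-- The order of `M₃`: `x ≤ y` iff `x = y`, or `x = 0`, or `y = 1`. -/
def M3.le (x y : M3) : Prop := x = y ∨ x = M3.z ∨ y = M3.o

instance : DecidableRel M3.le := fun x y =>
  inferInstanceAs (Decidable (x = y ∨ x = M3.z ∨ y = M3.o))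

theorem M3.le_refl : ∀ x : M3, M3.le x x := by decide
theorem M3.le_trans : ∀ x y w : M3, M3.le x y → M3.le y w → M3.le x w := by decide
theorem M3.le_antisymm : ∀ x y : M3, M3.le x y → M3.le y x → x = y := by decide

instance : PartialOrder M3 where
  le := M3.le
  le_refl := M3.le_refl
  le_trans := M3.le_trans
  le_antisymm := M3.le_antisymm

instance : DecidableRel ((· ≤ ·) : M3 → M3 → Prop) := fun x y =>
  inferInstanceAs (Decidable (M3.le x y))

theorem M3.z_le : ∀ x : M3, M3.le M3.z x := by decide

instance : OrderBot M3 where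
  bot := M3.z
  bot_le := M3.z_le

/-- The poset `X_{M₃} = {(x,y) ∈ M₃ × M₃ | x ≰ y}` with
`(x,y) ⊑ (x',y') ↔ x ≤ x' ∧ y' ≤ y`. -/
def XM3 : Type := {p : M3 × M3 // ¬ p.1 ≤ p.2}

def XM3.mk (p : M3 × M3) (h : ¬ p.1 ≤ p.2) : XM3 := ⟨p, h⟩

def XM3.val (x : XM3) : M3 × M3 := Subtype.val x

instance : PartialOrder XM3 where
  le x y := x.val.1 ≤ y.val.1 ∧ y.val.2 ≤ x.val.2
  le_refl x := ⟨le_refl _, le_refl _⟩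
  le_trans x y z h h' := ⟨h.1.trans h'.1, h'.2.trans h.2⟩
  le_antisymm x y h h' :=
    Subtype.ext (Prod.ext (le_antisymm h.1 h'.1) (le_antisymm h'.2 h.2))

/-- Interior in the downset topology: `□U = {x | ↓x ⊆ U}`. -/
def box (U : Set XM3) : Set XM3 := {x | ∀ y, y ≤ x → y ∈ U}

/-- Closure in the downset topology: `◇U = {x | ↓x ∩ U ≠ ∅}`. -/
def dia (U : Set XM3) : Set XM3 := {x | ∃ y, y ≤ x ∧ y ∈ U}

/-- The `⊑`-downset of `x` in `X_{M₃}`. -/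
def dn (x : XM3) : Set XM3 := {y | y ≤ x}

instance : DecidableEq XM3 :=
  inferInstanceAs (DecidableEq {p : M3 × M3 // ¬ p.1 ≤ p.2})

instance : Fintype XM3 :=
  inferInstanceAs (Fintype {p : M3 × M3 // ¬ p.1 ≤ p.2})

instance : DecidableRel ((· ≤ ·) : XM3 → XM3 → Prop) := fun x y =>
  inferInstanceAs (Decidable (x.val.1 ≤ y.val.1 ∧ y.val.2 ≤ x.val.2))

instance : DecidablePred (IsMin : XM3 → Prop) := fun x =>
  inferInstanceAs (Decidable (∀ y, y ≤ x → x ≤ y))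

namespace XM3

theorem exists_isMin_le (x : XM3) : ∃ m, IsMin m ∧ m ≤ x := by
  obtain ⟨m, hmx, hm⟩ := exists_minimal_le_of_wellFoundedLT (fun _ ↦ True) x trivial
  exact ⟨m, minimal_true.mp hm, hmx⟩

theorem isMin_iff (x : XM3) :
    IsMin x ↔ x = mk (M3.a, M3.b) (by decide) ∨ x = mk (M3.a, M3.c) (by decide) ∨
      x = mk (M3.b, M3.a) (by decide) ∨ x = mk (M3.b, M3.c) (by decide) ∨
      x = mk (M3.c, M3.a) (by decide) ∨ x = mk (M3.c, M3.b) (by decide) := by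
  revert x
  decide

theorem card_isMin : Fintype.card {m : XM3 // IsMin m} = 6 := by decide

theorem eq_of_forall_isMin_le {m x : XM3} (hm : IsMin m)
    (h : ∀ n, IsMin n → n ≤ x → n = m) : x = m := by
  revert m x
  decide

end XM3

theorem isLowerSet_box (U : Set XM3) : IsLowerSet (box U) :=
  fun _ _ hyx hx z hzy ↦ hx z (hzy.trans hyx)

theorem subset_dia (U : Set XM3) : U ⊆ dia U :=
  fun x hx ↦ ⟨x, le_rfl, hx⟩

theorem box_subset (U : Set XM3) : box U ⊆ U :=
  fun x hx ↦ hx x le_rfl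

theorem box_mono {U V : Set XM3} (h : U ⊆ V) : box U ⊆ box V :=
  fun _ hx y hy ↦ h (hx y hy)

theorem dia_mono {U V : Set XM3} (h : U ⊆ V) : dia U ⊆ dia V :=
  fun _ ⟨y, hy, hyU⟩ ↦ ⟨y, hy, h hyU⟩

theorem box_box (U : Set XM3) : box (box U) = box U :=
  (box_subset _).antisymm fun _ hx _ hy z hz ↦ hx z (hz.trans hy)

theorem dia_dia (U : Set XM3) : dia (dia U) = dia U :=
  (subset_dia _).antisymm' fun _ ⟨_, hy, z, hz, hzU⟩ ↦ ⟨z, hz.trans hy, hzU⟩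

theorem box_dia_box_dia (U : Set XM3) : box (dia (box (dia U))) = box (dia U) := by
  refine subset_antisymm ?_ ?_
  · calc box (dia (box (dia U))) ⊆ box (dia (dia U)) := box_mono (dia_mono (box_subset _))
      _ = box (dia U) := by rw [dia_dia]
  · calc box (dia U) = box (box (dia U)) := (box_box _).symm
      _ ⊆ box (dia (box (dia U))) := box_mono (subset_dia _)

theorem mem_box_dia_of_isMin {U : Set XM3} {m : XM3} (hm : IsMin m) :
    m ∈ box (dia U) ↔ m ∈ U := by
  refine ⟨fun h ↦ ?_, fun h y hy ↦ ⟨m, hm.eq_of_ge hy ▸ le_rfl, h⟩⟩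
  obtain ⟨y, hy, hyU⟩ := h m le_rfl
  exact hm.eq_of_le hy ▸ hyU

theorem dia_inter_isMin {U : Set XM3} (hU : IsLowerSet U) :
    dia {x | x ∈ U ∧ IsMin x} = dia U := by
  refine (dia_mono fun _ hx ↦ hx.1).antisymm fun x ⟨y, hyx, hyU⟩ ↦ ?_
  obtain ⟨m, hm, hmy⟩ := XM3.exists_isMin_le y
  exact ⟨m, hmy.trans hyx, hU hmy hyU, hm⟩

def regularOpenEquiv : {U : Set XM3 // U = box (dia U)} ≃ Set {m : XM3 // IsMin m} where
  toFun U := {m | m.1 ∈ U.1}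
  invFun W := ⟨box (dia (Subtype.val '' W)), (box_dia_box_dia _).symm⟩
  left_inv := by
    rintro ⟨U, hU⟩
    have hlower : IsLowerSet U := hU ▸ isLowerSet_box _
    have himage :
        Subtype.val '' {m : {m : XM3 // IsMin m} | m.1 ∈ U} = {x | x ∈ U ∧ IsMin x} := by
      ext x
      simp
    simp only [Subtype.mk.injEq, himage, dia_inter_isMin hlower]
    exact hU.symm
  right_inv W := by
    ext m
    simp [mem_box_dia_of_isMin m.2, m.2]

theorem ncard_regularOpen : Set.ncard {U : Set XM3 | U = box (dia U)} = 64 := by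
  rw [← Nat.card_coe_set_eq]
  refine (Nat.card_congr regularOpenEquiv).trans ?_
  rw [Nat.card_eq_fintype_card, Fintype.card_set, XM3.card_isMin]
  rfl

theorem box_dia_singleton {m : XM3} (hm : IsMin m) : box (dia {m}) = {m} := by
  refine subset_antisymm (fun x hx ↦ XM3.eq_of_forall_isMin_le hm fun n hn hnx ↦ ?_) ?_
  · obtain ⟨_, hmn, rfl⟩ := hx n hnx
    exact hn.eq_of_le hmn |>.symm
  · rintro _ rfl
    exact (mem_box_dia_of_isMin hm).mpr rfl

theorem regularOpen_atom_iff {U : Set XM3} (hU : U = box (dia U)) :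
    (U ≠ ∅ ∧ ∀ V : Set XM3, V = box (dia V) → V ⊆ U → V = ∅ ∨ V = U) ↔
      ∃ m, IsMin m ∧ U = {m} := by
  constructor
  · rintro ⟨hne, hatom⟩
    obtain ⟨u, hu⟩ := Set.nonempty_iff_ne_empty.mpr hne
    obtain ⟨m, hm, hmu⟩ := XM3.exists_isMin_le u
    have hmU : m ∈ U := (hU ▸ isLowerSet_box _ : IsLowerSet U) hmu hu
    rcases hatom {m} (box_dia_singleton hm).symm (Set.singleton_subset_iff.mpr hmU) with h | h
    · exact absurd h (Set.singleton_ne_empty m)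
    · exact ⟨m, hm, h.symm⟩
  · rintro ⟨m, -, rfl⟩
    exact ⟨Set.singleton_ne_empty m, fun V _ hV ↦ Set.subset_singleton_iff_eq.mp hV⟩

/-- the regular open algebra `B(M₃)` is the 64-element Boolean
algebra whose atoms are exactly the six singletons `{(a,b)}`, `{(a,c)}`,
`{(b,a)}`, `{(b,c)}`, `{(c,a)}`, `{(c,b)}`. -/
theorem M3_regular_open_algebra_card_and_atoms :
    Set.ncard {U : Set XM3 | U = box (dia U)} = 64 ∧
    (∀ U : Set XM3, U = box (dia U) →
      ((U ≠ ∅ ∧ ∀ V : Set XM3, V = box (dia V) → V ⊆ U → V = ∅ ∨ V = U) ↔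
        U ∈ ({ {XM3.mk (M3.a, M3.b) (by decide)}, {XM3.mk (M3.a, M3.c) (by decide)},
               {XM3.mk (M3.b, M3.a) (by decide)}, {XM3.mk (M3.b, M3.c) (by decide)},
               {XM3.mk (M3.c, M3.a) (by decide)}, {XM3.mk (M3.c, M3.b) (by decide)} }
          : Set (Set XM3)))) := by
  refine ⟨ncard_regularOpen, fun U hU ↦ ?_⟩
  rw [regularOpen_atom_iff hU]
  simp only [XM3.isMin_iff, or_and_right, exists_or, exists_eq_left, Set.mem_insert_iff,
    Set.mem_singleton_iff]
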